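/- arXiv:1608.03452 — 2 statements merged into one kernel-verified Lean document; each statement's English description precedes it below -/
import Mathlib

section
/- Let Λ, Ω, Y be normed vector spaces, X a reflexive Banach space, and D a nonempty compact convex subset of X. Let K : D × Λ → 2^D and F : D × D × Ω → 2^Y be set-valued mappings and C ⊆ Y a closed set with nonempty interior; define M₁(u, λ) = {x ∈ cl K(x, λ) : F(x, y, u) ∩ (Y \ (−int C)) ≠ ∅ for all y ∈ K(x, λ)}, and assume M₁(u, λ) ≠ ∅ for all (u, λ) in a neighborhood of (u₀, λ₀) ∈ Ω × Λ. Assume: (i) K(·, λ₀) is rotund and K is continuous at every point of D × {λ₀} with nonempty closed convex values; (ii) F has the C-inclusion property at every point of D × D × {u₀}. Then M₁(·, ·) is lower semicontinuous at (u₀, λ₀). -/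
open Filter Topology Set Pointwise

/-- A set-valued mapping `Φ` is lower semicontinuous at `u₀` if for every `x ∈ Φ(u₀)` and
every open neighborhood `V` of `x` there is a neighborhood `U` of `u₀` such that
`Φ(u) ∩ V ≠ ∅` for all `u ∈ U`. -/
def LscAt {Δ Δ₁ : Type*} [TopologicalSpace Δ] [TopologicalSpace Δ₁]
    (Φ : Δ → Set Δ₁) (u₀ : Δ) : Prop :=
  ∀ x ∈ Φ u₀, ∀ V : Set Δ₁, IsOpen V → x ∈ V →
    ∃ U ∈ 𝓝 u₀, ∀ u ∈ U, (Φ u ∩ V).Nonempty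

/-- Lower semicontinuity at `u₀` of a set-valued mapping whose domain is the subset `s`
(neighborhoods are taken relative to `s`). -/
def LscWithinAt {Δ Δ₁ : Type*} [TopologicalSpace Δ] [TopologicalSpace Δ₁]
    (Φ : Δ → Set Δ₁) (s : Set Δ) (u₀ : Δ) : Prop :=
  ∀ x ∈ Φ u₀, ∀ V : Set Δ₁, IsOpen V → x ∈ V →
    ∃ U ∈ 𝓝[s] u₀, ∀ u ∈ U, (Φ u ∩ V).Nonempty

/-- A set-valued mapping `Φ` is upper semicontinuous at `u₀` if for every open `V ⊇ Φ(u₀)`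
there is a neighborhood `U` of `u₀` with `Φ(u) ⊆ V` for all `u ∈ U`. -/
def UscAt {Δ Δ₁ : Type*} [TopologicalSpace Δ] [TopologicalSpace Δ₁]
    (Φ : Δ → Set Δ₁) (u₀ : Δ) : Prop :=
  ∀ V : Set Δ₁, IsOpen V → Φ u₀ ⊆ V → ∃ U ∈ 𝓝 u₀, ∀ u ∈ U, Φ u ⊆ V

/-- Upper semicontinuity at `u₀` of a set-valued mapping whose domain is the subset `s`
(neighborhoods are taken relative to `s`). -/
def UscWithinAt {Δ Δ₁ : Type*} [TopologicalSpace Δ] [TopologicalSpace Δ₁]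
    (Φ : Δ → Set Δ₁) (s : Set Δ) (u₀ : Δ) : Prop :=
  ∀ V : Set Δ₁, IsOpen V → Φ u₀ ⊆ V → ∃ U ∈ 𝓝[s] u₀, ∀ u ∈ U, Φ u ⊆ V

/-- The graph of a set-valued mapping `Φ` with domain `A`. -/
def GraphOn {X Z : Type*} (A : Set X) (Φ : X → Set Z) : Set (X × Z) :=
  {p | p.1 ∈ A ∧ p.2 ∈ Φ p.1}

/-- A set-valued mapping `Φ` with domain `A` is rotund if its graph is convex and, for any
two points of the graph with distinct first components and distinct second components,
the open segment between them meets the complement of the boundary of the graph. -/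
def RotundOn {X Z : Type*} [NormedAddCommGroup X] [NormedSpace ℝ X]
    [NormedAddCommGroup Z] [NormedSpace ℝ Z] (A : Set X) (Φ : X → Set Z) : Prop :=
  Convex ℝ (GraphOn A Φ) ∧
    ∀ p ∈ GraphOn A Φ, ∀ q ∈ GraphOn A Φ, p.1 ≠ q.1 → p.2 ≠ q.2 →
      ∃ l ∈ Set.Ioo (0 : ℝ) 1, l • p + (1 - l) • q ∈ (frontier (GraphOn A Φ))ᶜ

/-- `Ψ` has the `C`-inclusion property at `p₀` (relative to the domain `s`): for every
sequence in `s` converging to `p₀`, if `Ψ(p₀) ∩ (Y \ −int C) ≠ ∅` then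
`Ψ(pₙ) ∩ (Y \ −int C) ≠ ∅` for some index `n`. -/
def CInclusionWithinAt {P Y : Type*} [TopologicalSpace P] [TopologicalSpace Y]
    [NormedAddCommGroup Y] (Ψ : P → Set Y) (C : Set Y) (s : Set P) (p₀ : P) : Prop :=
  ∀ p : ℕ → P, (∀ n, p n ∈ s) → Filter.Tendsto p Filter.atTop (𝓝 p₀) →
    (Ψ p₀ ∩ (-(interior C))ᶜ).Nonempty → ∃ n, (Ψ (p n) ∩ (-(interior C))ᶜ).Nonempty

/-! If lower semicontinuity failed at `x₀ ∈ M₁(u₀, λ₀)` for an open `V ∋ x₀`, solutions for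
parameters `pₙ → (u₀, λ₀)` that avoid `V` would accumulate at a fixed point `b ≠ x₀` of `K(·, λ₀)`.
Rotundity then puts an interior point of the graph of `K(·, λ₀)` on the diagonal, and convexity
yields such diagonal interior points `(x, x)` arbitrarily close to `(x₀, x₀)`. There `K(x, λ₀)`
contains a ball around `x`, so lower semicontinuity of `K` and a separation argument give
`x ∈ K(x, λ)` for all `λ` near `λ₀`. Such an `x ∈ V` is then no solution for some `pₙ` with
`x ∈ K(x, λₙ)`, so some `y ∈ K(x, λₙ)` violates the solution condition. Letting `x → x₀`, the
violating `y` accumulate at a point of `K(x₀, λ₀)` by upper semicontinuity, and the `C`-inclusion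
property there contradicts their choice. -/

/-- The solution set `M₁(u, λ)`, with `p = (u, λ)`. -/
def qepSolutions {X Y Ω Λ : Type*} [TopologicalSpace X] [NormedAddCommGroup Y]
    (D : Set X) (K : X → Λ → Set X) (F : X → X → Ω → Set Y) (C : Set Y) (p : Ω × Λ) :
    Set X :=
  {x | x ∈ D ∧ x ∈ closure (K x p.2) ∧ ∀ y ∈ K x p.2, (F x y p.1 ∩ (-(interior C))ᶜ).Nonempty}

section SetValued

variable {P Z ι : Type*} [TopologicalSpace P] [TopologicalSpace Z] {Φ : P → Set Z} {s : Set P}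
  {p₀ : P} {l : Filter ι} {p : ι → P}

theorem UscWithinAt.mem_of_tendsto [RegularSpace Z] [l.NeBot] (hΦ : UscWithinAt Φ s p₀)
    (hcl : IsClosed (Φ p₀)) (hp : Tendsto p l (𝓝[s] p₀)) {b : ι → Z} {y : Z}
    (hb : ∀ᶠ i in l, b i ∈ Φ (p i)) (hby : Tendsto b l (𝓝 y)) : y ∈ Φ p₀ := by
  by_contra hy
  obtain ⟨t, ht, htc, htΦ⟩ := exists_mem_nhds_isClosed_subset (hcl.isOpen_compl.mem_nhds hy)
  obtain ⟨U, hU, hUΦ⟩ := hΦ tᶜ htc.isOpen_compl fun z hz hzt => htΦ hzt hz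
  obtain ⟨i, hbt, hbΦ, hpU⟩ := ((hby.eventually_mem ht).and (hb.and (hp.eventually_mem hU))).exists
  exact hUΦ _ hpU hbΦ hbt

theorem LscWithinAt.eventually_inter_nonempty (hΦ : LscWithinAt Φ s p₀)
    (hp : Tendsto p l (𝓝[s] p₀)) {y : Z} (hy : y ∈ Φ p₀) {V : Set Z} (hV : IsOpen V)
    (hyV : y ∈ V) : ∀ᶠ i in l, (Φ (p i) ∩ V).Nonempty := by
  obtain ⟨U, hU, hUV⟩ := hΦ y hy V hV hyV
  exact (hp.eventually_mem hU).mono fun i hi => hUV _ hi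

end SetValued

theorem IsCompact.eventually_subset_thickening {X ι : Type*} [PseudoMetricSpace X] {S : Set X}
    (hS : IsCompact S) {Φ : ι → Set X} {l : Filter ι}
    (hΦ : ∀ y ∈ S, ∀ ε > 0, ∀ᶠ i in l, (Φ i ∩ Metric.ball y ε).Nonempty) {δ : ℝ} (hδ : 0 < δ) :
    ∀ᶠ i in l, S ⊆ Metric.thickening δ (Φ i) := by
  obtain ⟨t, htS, htfin, hSt⟩ := hS.finite_cover_balls (half_pos hδ)
  filter_upwards [htfin.eventually_all.2 fun y hy => hΦ y (htS hy) _ (half_pos hδ)] with i hi z hz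
  obtain ⟨y, hyt, hzy⟩ := mem_iUnion₂.1 (hSt hz)
  obtain ⟨w, hwΦ, hwy⟩ := hi y hyt
  exact Metric.mem_thickening_iff.2 ⟨w, hwΦ, by
    linarith [dist_triangle_right z w y, Metric.mem_ball.1 hzy, Metric.mem_ball.1 hwy]⟩

theorem ContinuousLinearMap.exists_norm_le_one_mul_opNorm_le_apply {E : Type*}
    [NormedAddCommGroup E] [NormedSpace ℝ E] (f : E →L[ℝ] ℝ) {c : ℝ} (hc : c < 1) :
    ∃ v : E, ‖v‖ ≤ 1 ∧ c * ‖f‖ ≤ f v := by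
  rcases (norm_nonneg f).eq_or_lt with hf | hf
  · exact ⟨0, by simp, by simp [← hf]⟩
  obtain ⟨w, hw, hfw⟩ := f.exists_lt_apply_of_lt_opNorm (by nlinarith : c * ‖f‖ < ‖f‖)
  rcases le_total 0 (f w) with hfw0 | hfw0
  · rw [Real.norm_of_nonneg hfw0] at hfw
    exact ⟨w, hw.le, hfw.le⟩
  · rw [Real.norm_of_nonpos hfw0] at hfw
    exact ⟨-w, by rw [norm_neg]; exact hw.le, by rw [map_neg]; exact hfw.le⟩

theorem Convex.mem_of_closedBall_subset_thickening {E : Type*} [NormedAddCommGroup E]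
    [NormedSpace ℝ E] {A : Set E} (hA : Convex ℝ A) (hAc : IsClosed A) {x : E} {r δ : ℝ}
    (hδ : 0 ≤ δ) (hδr : δ < r) (hball : Metric.closedBall x r ⊆ Metric.thickening δ A) :
    x ∈ A := by
  by_contra hx
  obtain ⟨f, u, hfA, hfx⟩ := geometric_hahn_banach_closed_point hA hAc hx
  have hr : 0 < r := hδ.trans_lt hδr
  obtain ⟨v, hv, hfv⟩ := f.exists_norm_le_one_mul_opNorm_le_apply ((div_lt_one hr).2 hδr)
  have hxv : x + r • v ∈ Metric.closedBall x r := by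
    rw [Metric.mem_closedBall, dist_self_add_left, norm_smul, Real.norm_of_nonneg hr.le]
    exact mul_le_of_le_one_right hr.le hv
  obtain ⟨a, haA, hxa⟩ := Metric.mem_thickening_iff.1 (hball hxv)
  -- `f` gains at least `δ * ‖f‖` along `r • v`, and loses at most that much from `x + r • v` to `a`
  have hgain : δ * ‖f‖ ≤ f (r • v) := by
    rw [map_smul, smul_eq_mul]
    calc δ * ‖f‖ = r * (δ / r * ‖f‖) := by field_simp
      _ ≤ r * f v := mul_le_mul_of_nonneg_left hfv hr.le
  have hloss : f (x + r • v) - f a ≤ ‖f‖ * δ := by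
    rw [← map_sub]
    exact (le_abs_self _).trans ((f.le_opNorm _).trans
      (mul_le_mul_of_nonneg_left (dist_eq_norm (x + r • v) a ▸ hxa.le) (norm_nonneg f)))
  rw [map_add] at hloss
  linarith [hfA a haA]

theorem exists_closedBall_subset_of_mem_interior_graphOn {X Z : Type*} [PseudoMetricSpace X]
    [PseudoMetricSpace Z] {D : Set X} {Φ : X → Set Z} {x : X} {y : Z}
    (h : (x, y) ∈ interior (GraphOn D Φ)) : ∃ r > 0, Metric.closedBall y r ⊆ Φ x := by
  obtain ⟨ρ, hρ, hball⟩ := Metric.isOpen_iff.1 isOpen_interior _ h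
  refine ⟨ρ / 2, half_pos hρ, fun z hz => (interior_subset (hball ?_) : (x, z) ∈ GraphOn D Φ).2⟩
  rw [Metric.mem_ball, Prod.dist_eq, dist_self, max_lt_iff]
  exact ⟨hρ, by linarith [Metric.mem_closedBall.1 hz]⟩

section Diagonal

variable {X : Type*} [NormedAddCommGroup X] [NormedSpace ℝ X]

theorem RotundOn.exists_diag_mem_interior {D : Set X} {Φ : X → Set X} (hΦ : RotundOn D Φ)
    {a b : X} (ha : (a, a) ∈ GraphOn D Φ) (hb : (b, b) ∈ GraphOn D Φ) (hab : a ≠ b) :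
    ∃ m, (m, m) ∈ interior (GraphOn D Φ) := by
  obtain ⟨t, ht, hfr⟩ := hΦ.2 _ ha _ hb hab hab
  have hmem := hΦ.1 ha hb ht.1.le (sub_nonneg.2 ht.2.le) (add_sub_cancel _ _)
  refine ⟨t • a + (1 - t) • b, ?_⟩
  rw [← closure_sdiff_frontier]
  simpa only [Prod.smul_mk, Prod.mk_add_mk] using ⟨subset_closure hmem, hfr⟩

theorem Convex.mem_closure_diag_interior {G : Set (X × X)} (hG : Convex ℝ G) {a m : X}
    (ha : (a, a) ∈ G) (hm : (m, m) ∈ interior G) :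
    a ∈ closure {x | (x, x) ∈ interior G} := by
  refine closure_mono ?_ (segment_subset_closure_openSegment (right_mem_segment ℝ m a))
  rintro _ ⟨s, t, hs, ht, hst, rfl⟩
  exact hG.openSegment_interior_closure_subset_interior hm (subset_closure ha)
    ⟨s, t, hs, ht, hst, by simp only [Prod.smul_mk, Prod.mk_add_mk]⟩

end Diagonal

section QuasiEquilibrium

variable {Λ Ω Y X : Type*} [TopologicalSpace Λ] [TopologicalSpace Ω] [NormedAddCommGroup Y]
  [NormedAddCommGroup X] {D : Set X} {K : X → Λ → Set X} {l₀ : Λ}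

/-- By lower semicontinuity and compactness, `K(x, λ)` comes uniformly close to every point of a
ball around `x`, and a closed convex set that does so contains the centre. -/
theorem eventually_mem_self_of_mem_interior_graphOn [NormedSpace ℝ X] (hDc : IsCompact D) {x : X}
    (hx : (x, x) ∈ interior (GraphOn D fun z => K z l₀)) (hKD : K x l₀ ⊆ D)
    (hlsc : LscWithinAt (fun p : X × Λ => K p.1 p.2) (D ×ˢ univ) (x, l₀))
    (hK : ∀ l, IsClosed (K x l) ∧ Convex ℝ (K x l)) : ∀ᶠ l in 𝓝 l₀, x ∈ K x l := by
  obtain ⟨r, hr, hball⟩ := exists_closedBall_subset_of_mem_interior_graphOn hx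
  have hpath : Tendsto (fun l => (x, l)) (𝓝 l₀) (𝓝[D ×ˢ univ] (x, l₀)) :=
    tendsto_nhdsWithin_iff.2 ⟨tendsto_const_nhds.prodMk_nhds tendsto_id,
      Eventually.of_forall fun _ => ⟨(interior_subset hx).1, trivial⟩⟩
  have hcompact : IsCompact (Metric.closedBall x r) :=
    hDc.of_isClosed_subset Metric.isClosed_closedBall (hball.trans hKD)
  filter_upwards [hcompact.eventually_subset_thickening (fun y hy ε hε =>
    hlsc.eventually_inter_nonempty hpath (hball hy) Metric.isOpen_ball (Metric.mem_ball_self hε))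
    (half_pos hr)] with l hl
  exact (hK l).2.mem_of_closedBall_subset_thickening (hK l).1 (half_pos hr).le (half_lt_self hr) hl

theorem mem_closure_setOf_eventually_mem_self [NormedSpace ℝ X] (hDc : IsCompact D)
    (hKD : ∀ x ∈ D, ∀ l, K x l ⊆ D)
    (hrot : RotundOn D fun x => K x l₀)
    (hlsc : ∀ x ∈ D, LscWithinAt (fun p : X × Λ => K p.1 p.2) (D ×ˢ univ) (x, l₀))
    (hK : ∀ x ∈ D, ∀ l, IsClosed (K x l) ∧ Convex ℝ (K x l)) {a b : X}
    (ha : (a, a) ∈ GraphOn D fun x => K x l₀) (hb : (b, b) ∈ GraphOn D fun x => K x l₀)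
    (hab : a ≠ b) : a ∈ closure {x | x ∈ D ∧ ∀ᶠ l in 𝓝 l₀, x ∈ K x l} := by
  obtain ⟨m, hm⟩ := hrot.exists_diag_mem_interior ha hb hab
  refine closure_mono (fun x hx => ?_) (hrot.1.mem_closure_diag_interior ha hm)
  have hxD : x ∈ D := (interior_subset hx).1
  exact ⟨hxD, eventually_mem_self_of_mem_interior_graphOn hDc hx (hKD x hxD l₀) (hlsc x hxD)
    (hK x hxD)⟩

theorem exists_fixedPoint_of_tendsto [FirstCountableTopology Λ] (hDc : IsCompact D)
    (husc : ∀ x ∈ D, UscWithinAt (fun p : X × Λ => K p.1 p.2) (D ×ˢ univ) (x, l₀))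
    (hcl : ∀ x ∈ D, IsClosed (K x l₀)) {l : ℕ → Λ} (hl : Tendsto l atTop (𝓝 l₀)) {z : ℕ → X}
    (hzD : ∀ n, z n ∈ D) (hzK : ∀ n, z n ∈ K (z n) (l n)) {T : Set X} (hT : IsClosed T)
    (hzT : ∀ n, z n ∈ T) : ∃ b ∈ D ∩ T, b ∈ K b l₀ := by
  obtain ⟨b, hbD, φ, hφ, hzb⟩ := hDc.tendsto_subseq hzD
  refine ⟨b, ⟨hbD, hT.mem_of_tendsto hzb (Eventually.of_forall fun n => hzT _)⟩, ?_⟩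
  exact (husc b hbD).mem_of_tendsto (hcl b hbD)
    (tendsto_nhdsWithin_iff.2 ⟨hzb.prodMk_nhds (hl.comp hφ.tendsto_atTop),
      Eventually.of_forall fun n => ⟨hzD _, trivial⟩⟩)
    (Eventually.of_forall fun n => hzK (φ n)) hzb

theorem exists_mem_qepSolutions_of_tendsto {F : X → X → Ω → Set Y} {C : Set Y} {x₀ : X}
    {q₀ : Ω × Λ} (hx₀ : x₀ ∈ qepSolutions D K F C q₀) (hDc : IsCompact D)
    (hKD : ∀ x ∈ D, ∀ l, K x l ⊆ D)
    (husc : UscWithinAt (fun p : X × Λ => K p.1 p.2) (D ×ˢ univ) (x₀, q₀.2))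
    (hcl : IsClosed (K x₀ q₀.2))
    (hincl : ∀ y ∈ D, CInclusionWithinAt (fun q : X × X × Ω => F q.1 q.2.1 q.2.2) C
      (D ×ˢ D ×ˢ univ) (x₀, y, q₀.1))
    {x : ℕ → X} {q : ℕ → Ω × Λ} (hxD : ∀ k, x k ∈ D) (hxK : ∀ k, x k ∈ K (x k) (q k).2)
    (hx : Tendsto x atTop (𝓝 x₀)) (hq : Tendsto q atTop (𝓝 q₀)) :
    ∃ k, x k ∈ qepSolutions D K F C (q k) := by
  by_contra! hbad
  have hviolated : ∀ k, ∃ y ∈ K (x k) (q k).2,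
      ¬(F (x k) y (q k).1 ∩ (-(interior C))ᶜ).Nonempty := fun k => by
    simpa [qepSolutions, hxD k, subset_closure (hxK k)] using hbad k
  choose y hyK hyF using hviolated
  have hyD : ∀ k, y k ∈ D := fun k => hKD _ (hxD k) _ (hyK k)
  obtain ⟨y₀, hy₀D, φ, hφ, hyφ⟩ := hDc.tendsto_subseq hyD
  have hxφ := hx.comp hφ.tendsto_atTop
  have hqφ := hq.comp hφ.tendsto_atTop
  have hy₀K : y₀ ∈ K x₀ q₀.2 := husc.mem_of_tendsto hcl
    (tendsto_nhdsWithin_iff.2 ⟨hxφ.prodMk_nhds (hqφ.snd_nhds),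
      Eventually.of_forall fun k => ⟨hxD _, trivial⟩⟩)
    (Eventually.of_forall fun k => hyK (φ k)) hyφ
  obtain ⟨k, hk⟩ := hincl y₀ hy₀D (fun k => (x (φ k), y (φ k), (q (φ k)).1))
    (fun k => ⟨hxD _, hyD _, trivial⟩) (hxφ.prodMk_nhds (hyφ.prodMk_nhds hqφ.fst_nhds))
    (hx₀.2.2 y₀ hy₀K)
  exact hyF (φ k) hk

end QuasiEquilibrium

theorem stmt_13_general {Λ Ω Y X : Type*}
    [NormedAddCommGroup Λ] [NormedAddCommGroup Ω] [NormedAddCommGroup Y]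
    [NormedAddCommGroup X] [NormedSpace ℝ X]
    (D : Set X) (hDcomp : IsCompact D)
    (K : X → Λ → Set X) (hKD : ∀ x ∈ D, ∀ l : Λ, K x l ⊆ D)
    (F : X → X → Ω → Set Y)
    (C : Set Y)
    (u₀ : Ω) (l₀ : Λ)
    (M₁ : Ω × Λ → Set X)
    (hM₁ : ∀ p : Ω × Λ, M₁ p = {x | x ∈ D ∧ x ∈ closure (K x p.2) ∧
      ∀ y ∈ K x p.2, (F x y p.1 ∩ (-(interior C))ᶜ).Nonempty})
    (hMne : ∃ U ∈ 𝓝 ((u₀, l₀) : Ω × Λ), ∀ p ∈ U, (M₁ p).Nonempty)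
    (hKrot : RotundOn D (fun x => K x l₀))
    (hKcont : ∀ x ∈ D,
      UscWithinAt (fun p : X × Λ => K p.1 p.2) (D ×ˢ (univ : Set Λ)) (x, l₀) ∧
      LscWithinAt (fun p : X × Λ => K p.1 p.2) (D ×ˢ (univ : Set Λ)) (x, l₀))
    (hKval : ∀ x ∈ D, ∀ l : Λ, (K x l).Nonempty ∧ IsClosed (K x l) ∧ Convex ℝ (K x l))
    (hFincl : ∀ x ∈ D, ∀ y ∈ D,
      CInclusionWithinAt (fun q : X × X × Ω => F q.1 q.2.1 q.2.2) C
        (D ×ˢ D ×ˢ (univ : Set Ω)) (x, y, u₀)) :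
    LscAt M₁ (u₀, l₀) := by
  obtain rfl : M₁ = qepSolutions D K F C := funext hM₁
  intro x₀ hx₀ V hV hx₀V
  have hKcl : ∀ x ∈ D, ∀ l, closure (K x l) = K x l := fun x hx l =>
    (hKval x hx l).2.1.closure_eq
  refine ⟨_, ?_, fun q hq => hq⟩
  by_contra hbad
  obtain ⟨q, hq, hqVM⟩ := exists_seq_forall_of_frequently
    ((not_eventually.1 hbad).and_eventually (eventually_iff_exists_mem.2 hMne))
  have hqV n := (hqVM n).1
  choose z hz using fun n => (hqVM n).2
  obtain ⟨b, ⟨hbD, hbV⟩, hbK⟩ := exists_fixedPoint_of_tendsto hDcomp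
    (fun x hx => (hKcont x hx).1) (fun x hx => (hKval x hx l₀).2.1) hq.snd_nhds
    (fun n => (hz n).1) (fun n => hKcl _ (hz n).1 _ ▸ (hz n).2.1) hV.isClosed_compl
    fun n hzV => hqV n ⟨z n, hz n, hzV⟩
  have hx₀K : x₀ ∈ K x₀ l₀ := hKcl x₀ hx₀.1 l₀ ▸ hx₀.2.1
  have hstable := hV.inter_closure ⟨hx₀V, mem_closure_setOf_eventually_mem_self hDcomp hKD hKrot
    (fun x hx => (hKcont x hx).2) (fun x hx l => (hKval x hx l).2) ⟨hx₀.1, hx₀K⟩ ⟨hbD, hbK⟩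
    fun h => hbV (h ▸ hx₀V)⟩
  obtain ⟨x, hxS, hx⟩ := mem_closure_iff_seq_limit.1 hstable
  have hindex : ∀ k, ∃ n, k ≤ n ∧ x k ∈ K (x k) (q n).2 := fun k =>
    ((eventually_ge_atTop k).and (hq.snd_nhds (hxS k).2.2)).exists
  choose n hkn hxK using hindex
  obtain ⟨k, hk⟩ := exists_mem_qepSolutions_of_tendsto hx₀ hDcomp hKD (hKcont x₀ hx₀.1).1
    (hKval x₀ hx₀.1 l₀).2.1 (hFincl x₀ hx₀.1) (fun k => (hxS k).2.1) hxK hx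
    (hq.comp (tendsto_atTop_mono hkn tendsto_id))
  exact hqV (n k) ⟨x k, hk, (hxS k).1⟩

/-- Theorem 4.2: lower semicontinuity at `(u₀, λ₀)` of the solution mapping `M₁` of the
parametric vector quasiequilibrium problem, under: `K(·,λ₀)` rotund, `K` continuous at
every point of `D × {λ₀}` with nonempty closed convex values, and `F` having the
`C`-inclusion property at every point of `D × D × {u₀}`. Reflexivity of the Banach space
`X` is encoded as surjectivity of the canonical inclusion into the double dual. -/
theorem stmt_13 {Λ Ω Y X : Type*}
    [NormedAddCommGroup Λ] [NormedSpace ℝ Λ]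
    [NormedAddCommGroup Ω] [NormedSpace ℝ Ω]
    [NormedAddCommGroup Y] [NormedSpace ℝ Y]
    [NormedAddCommGroup X] [NormedSpace ℝ X] [CompleteSpace X]
    (hrefl : Function.Surjective (NormedSpace.inclusionInDoubleDual ℝ X))
    (D : Set X) (hDne : D.Nonempty) (hDcomp : IsCompact D) (hDconv : Convex ℝ D)
    (K : X → Λ → Set X) (hKD : ∀ x ∈ D, ∀ l : Λ, K x l ⊆ D)
    (F : X → X → Ω → Set Y)
    (C : Set Y) (hCclosed : IsClosed C) (hCint : (interior C).Nonempty)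
    (u₀ : Ω) (l₀ : Λ)
    (M₁ : Ω × Λ → Set X)
    (hM₁ : ∀ p : Ω × Λ, M₁ p = {x | x ∈ D ∧ x ∈ closure (K x p.2) ∧
      ∀ y ∈ K x p.2, (F x y p.1 ∩ (-(interior C))ᶜ).Nonempty})
    (hMne : ∃ U ∈ 𝓝 ((u₀, l₀) : Ω × Λ), ∀ p ∈ U, (M₁ p).Nonempty)
    (hKrot : RotundOn D (fun x => K x l₀))
    (hKcont : ∀ x ∈ D,
      UscWithinAt (fun p : X × Λ => K p.1 p.2) (D ×ˢ (univ : Set Λ)) (x, l₀) ∧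
      LscWithinAt (fun p : X × Λ => K p.1 p.2) (D ×ˢ (univ : Set Λ)) (x, l₀))
    (hKval : ∀ x ∈ D, ∀ l : Λ, (K x l).Nonempty ∧ IsClosed (K x l) ∧ Convex ℝ (K x l))
    (hFincl : ∀ x ∈ D, ∀ y ∈ D,
      CInclusionWithinAt (fun q : X × X × Ω => F q.1 q.2.1 q.2.2) C
        (D ×ˢ D ×ˢ (univ : Set Ω)) (x, y, u₀)) :
    LscAt M₁ (u₀, l₀) :=
  stmt_13_general D hDcomp K hKD F C u₀ l₀ M₁ hM₁ hMne hKrot hKcont hKval hFincl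
end

section
/- Let Λ, Ω, Y be normed vector spaces, X a reflexive Banach space, and D a nonempty compact convex subset of X. Let K : D × Λ → 2^D and F : D × D × Ω → 2^Y be set-valued mappings and C ⊆ Y a closed set with nonempty interior; define M₂(u, λ) = {x ∈ cl K(x, λ) : F(x, y, u) ⊆ Y \ (−int C) for all y ∈ K(x, λ)}, and assume M₂(u, λ) ≠ ∅ for all (u, λ) in a neighborhood of (u₀, λ₀) ∈ Ω × Λ. Assume: (i) K(·, λ₀) is rotund and K is continuous at every point of D × {λ₀} with nonempty closed convex values; (ii) F is upper semicontinuous at every point of D × D × {u₀}; (iii) for every x ∈ M₂(u₀, λ₀) and every y ∈ K(x, λ₀), F(x, y, u₀) ⊆ Y \ (−C). Then M₂(·, ·) is lower semicontinuous at (u₀, λ₀). -/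
/-!
If `x` is the only fixed point of `K(·, λ₀)` in `D`, upper semicontinuity of `K` and
compactness of `D` confine the fixed points of `K(·, λ)` to any neighbourhood of `x` for `λ`
near `λ₀`; every solution is such a fixed point, and solutions exist nearby.

Otherwise rotundity gives points `w` arbitrarily close to `x` with `(w, w)` interior to the
graph of `K(·, λ₀)`, so `K(w, λ₀)` is a neighbourhood of `w`. Lower semicontinuity and
convexity of the values keep `w ∈ K(w, λ)` for `λ` near `λ₀`, and upper semicontinuity of `K`
and `F`, applied to (iii) on the compact set `K(x, λ₀)`, keep `F(w, y, u) ⊆ Y \ −C` for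
`y ∈ K(w, λ)`. So `w` solves the perturbed problem.
-/

open Filter Topology Set Pointwise

open Metric

lemma ContinuousLinearMap.exists_norm_le_one_half_opNorm_le_apply {E : Type*}
    [NormedAddCommGroup E] [NormedSpace ℝ E] (f : E →L[ℝ] ℝ) :
    ∃ e : E, ‖e‖ ≤ 1 ∧ ‖f‖ / 2 ≤ f e := by
  rcases eq_or_ne f 0 with rfl | hf
  · exact ⟨0, by simp⟩
  obtain ⟨e, he, hfe⟩ := f.exists_lt_apply_of_lt_opNorm (half_lt_self (norm_pos_iff.mpr hf))
  rw [Real.norm_eq_abs] at hfe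
  rcases le_total 0 (f e) with h | h
  · exact ⟨e, he.le, by linarith [abs_of_nonneg h]⟩
  · exact ⟨-e, by rw [norm_neg]; exact he.le, by rw [map_neg]; linarith [abs_of_nonpos h]⟩

/-- If `w ∉ S`, a functional separating `w` from `S` grows by `ρ ‖f‖ / 2` along a suitable
radius of the ball, more than it can lose within distance `ρ / 2`. -/
lemma Convex.mem_of_forall_inter_ball_nonempty {E : Type*} [NormedAddCommGroup E]
    [NormedSpace ℝ E] {S : Set E} (hS : Convex ℝ S) (hSc : IsClosed S) {w : E} {ρ : ℝ}
    (hρ : 0 < ρ) (h : ∀ v ∈ closedBall w ρ, (S ∩ ball v (ρ / 2)).Nonempty) : w ∈ S := by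
  by_contra hw
  obtain ⟨f, u, hfS, hfw⟩ := geometric_hahn_banach_closed_point hS hSc hw
  obtain ⟨e, he, hfe⟩ := f.exists_norm_le_one_half_opNorm_le_apply
  set v := w + ρ • e
  have hv : v ∈ closedBall w ρ := by
    simpa [v, norm_smul, abs_of_pos hρ] using mul_le_of_le_one_right hρ.le he
  obtain ⟨y, hyS, hyv⟩ := h v hv
  have hfv : f v = f w + ρ * f e := by simp [v]
  have hdrop : f (v - y) ≤ ‖f‖ * (ρ / 2) :=
    calc f (v - y) ≤ ‖f‖ * ‖v - y‖ := (Real.le_norm_self _).trans (f.le_opNorm _)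
      _ ≤ ‖f‖ * (ρ / 2) := by
        gcongr
        rw [← dist_eq_norm, dist_comm]
        exact (mem_ball.mp hyv).le
  rw [map_sub, hfv] at hdrop
  nlinarith [hfS y hyS, mul_le_mul_of_nonneg_left hfe hρ.le]

section SetValued

variable {Δ X : Type*} [TopologicalSpace Δ] {Φ : Δ → Set X} {s : Set Δ} {a : Δ}

lemma UscWithinAt.eventually_subset [TopologicalSpace X] (h : UscWithinAt Φ s a) {W : Set X}
    (hW : W ∈ 𝓝ˢ (Φ a)) : ∀ᶠ b in 𝓝[s] a, Φ b ⊆ W := by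
  obtain ⟨U, hUo, hΦU, hUW⟩ := mem_nhdsSet_iff_exists.mp hW
  obtain ⟨N, hN, hNU⟩ := h U hUo hΦU
  exact mem_of_superset hN fun b hb => (hNU b hb).trans hUW

lemma UscWithinAt.eventually_notMem [TopologicalSpace X] [RegularSpace X]
    (h : UscWithinAt Φ s a) (hcl : IsClosed (Φ a)) {g : Δ → X} (hg : ContinuousAt g a)
    (ha : g a ∉ Φ a) : ∀ᶠ b in 𝓝[s] a, g b ∉ Φ b := by
  obtain ⟨t, ht, htcl, htΦ⟩ := exists_mem_nhds_isClosed_subset (hcl.isOpen_compl.mem_nhds ha)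
  have hΦt : ∀ᶠ b in 𝓝[s] a, Φ b ⊆ tᶜ :=
    h.eventually_subset (htcl.isOpen_compl.mem_nhdsSet.mpr fun y hy hyt => htΦ hyt hy)
  filter_upwards [hΦt, nhdsWithin_le_nhds (hg.eventually_mem ht)] with b hb hgb
  exact fun hgΦ => hb hgΦ hgb

lemma LscWithinAt.eventually_forall_inter_ball_nonempty [PseudoMetricSpace X]
    (h : LscWithinAt Φ s a) {T : Set X} (hT : IsCompact T) (hTΦ : T ⊆ Φ a) {ε : ℝ}
    (hε : 0 < ε) : ∀ᶠ b in 𝓝[s] a, ∀ v ∈ T, (Φ b ∩ ball v ε).Nonempty := by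
  obtain ⟨t, htT, htfin, hTt⟩ := hT.finite_cover_balls (half_pos hε)
  have hnet : ∀ᶠ b in 𝓝[s] a, ∀ c ∈ t, (Φ b ∩ ball c (ε / 2)).Nonempty := by
    refine (eventually_all_finite htfin).mpr fun c hc => ?_
    obtain ⟨N, hN, hNc⟩ := h c (hTΦ (htT hc)) _ isOpen_ball (mem_ball_self (half_pos hε))
    exact mem_of_superset hN hNc
  filter_upwards [hnet] with b hb v hv
  obtain ⟨c, hct, hvc⟩ := mem_iUnion₂.mp (hTt hv)
  refine (hb c hct).mono (inter_subset_inter_right _ (ball_subset_ball' ?_))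
  linarith [mem_ball'.mp hvc]

/-- Only finitely many balls around points of `Φ a` can be controlled by lower
semicontinuity, hence the compactness assumption. -/
lemma LscWithinAt.eventually_mem [NormedAddCommGroup X] [NormedSpace ℝ X]
    (h : LscWithinAt Φ s a) (hc : IsCompact (Φ a)) {w : X} (hw : Φ a ∈ 𝓝 w)
    (hval : ∀ᶠ b in 𝓝[s] a, Convex ℝ (Φ b) ∧ IsClosed (Φ b)) :
    ∀ᶠ b in 𝓝[s] a, w ∈ Φ b := by
  obtain ⟨ρ, hρ, hball⟩ := nhds_basis_closedBall.mem_iff.mp hw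
  filter_upwards [hval, h.eventually_forall_inter_ball_nonempty
    (hc.of_isClosed_subset isClosed_closedBall hball) hball (half_pos hρ)] with b hb hmeet
  exact hb.1.mem_of_forall_inter_ball_nonempty hb.2 hρ hmeet

end SetValued

lemma eventually_mem_self_of_lscWithinAt {X Λ : Type*} [NormedAddCommGroup X]
    [NormedSpace ℝ X] [TopologicalSpace Λ] {D : Set X} {K : X → Λ → Set X} {l₀ : Λ}
    {w : X} (hw : w ∈ D) (hK : LscWithinAt (fun p : X × Λ => K p.1 p.2) (D ×ˢ univ) (w, l₀))
    (hKc : IsCompact (K w l₀)) (hKw : K w l₀ ∈ 𝓝 w)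
    (hval : ∀ x ∈ D, ∀ l, Convex ℝ (K x l) ∧ IsClosed (K x l)) :
    ∀ᶠ l in 𝓝 l₀, w ∈ K w l := by
  have hslice : Tendsto (fun l => (w, l)) (𝓝 l₀) (𝓝[D ×ˢ univ] (w, l₀)) :=
    tendsto_nhdsWithin_iff.mpr ⟨(Continuous.prodMk_right w).tendsto l₀,
      .of_forall fun l => ⟨hw, mem_univ l⟩⟩
  exact hslice.eventually <| hK.eventually_mem hKc hKw <|
    eventually_nhdsWithin_of_forall fun p hp => hval p.1 hp.1 p.2

lemma mem_nhds_of_mem_interior_graphOn {X Z : Type*} [TopologicalSpace X] [TopologicalSpace Z]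
    {D : Set X} {Φ : X → Set Z} {x : X} {z : Z} (h : (x, z) ∈ interior (GraphOn D Φ)) :
    x ∈ D ∧ Φ x ∈ 𝓝 z := by
  refine ⟨(interior_subset h).1, ?_⟩
  rw [mem_interior_iff_mem_nhds, nhds_prod_eq] at h
  obtain ⟨A, hA, B, hB, hAB⟩ := mem_prod_iff.mp h
  exact mem_of_superset hB fun v hv =>
    (show (x, v) ∈ GraphOn D Φ from hAB ⟨mem_of_mem_nhds hA, hv⟩).2

/-- Rotundity puts a diagonal point `(z, z)` in the interior of the graph; the convex graph
then contains the interior points `(x, x) + t ((z, z) - (x, x))`, `t ∈ (0, 1]`. -/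
lemma RotundOn.frequently_diag_mem_interior {X : Type*} [NormedAddCommGroup X]
    [NormedSpace ℝ X] {D : Set X} {Φ : X → Set X} (hΦ : RotundOn D Φ) {x x' : X}
    (hx : (x, x) ∈ GraphOn D Φ) (hx' : (x', x') ∈ GraphOn D Φ) (hne : x ≠ x') :
    ∃ᶠ w in 𝓝 x, (w, w) ∈ interior (GraphOn D Φ) := by
  obtain ⟨t, ht, hfr⟩ := hΦ.2 _ hx _ hx' hne hne
  set z := t • x + (1 - t) • x'
  have hzG : (z, z) ∈ GraphOn D Φ :=
    hΦ.1 hx hx' ht.1.le (sub_pos.mpr ht.2).le (add_sub_cancel t 1)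
  have hz : (z, z) ∈ interior (GraphOn D Φ) := by
    by_contra hint
    exact hfr ⟨subset_closure hzG, hint⟩
  have hseg : Tendsto (fun r : ℝ => x + r • (z - x)) (𝓝[>] 0) (𝓝 x) := by
    refine Tendsto.mono_left ?_ nhdsWithin_le_nhds
    simpa using ((continuous_id.smul continuous_const).const_add x).tendsto (0 : ℝ)
  refine hseg.frequently (Eventually.frequently ?_)
  filter_upwards [Ioc_mem_nhdsGT one_pos] with r hr
  simpa using hΦ.1.add_smul_sub_mem_interior hx hz hr

section Parametric

variable {X Λ : Type*} [TopologicalSpace X] [TopologicalSpace Λ] {D : Set X}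
  {K : X → Λ → Set X} {l₀ : Λ}

lemma eventually_forall_fixed_mem [RegularSpace X] (hD : IsCompact D)
    (hKusc : ∀ x ∈ D, UscWithinAt (fun p : X × Λ => K p.1 p.2) (D ×ˢ univ) (x, l₀))
    (hKcl : ∀ x ∈ D, IsClosed (K x l₀)) {V : Set X} (hV : IsOpen V)
    (hfix : ∀ x ∈ D, x ∈ K x l₀ → x ∈ V) :
    ∀ᶠ l in 𝓝 l₀, ∀ x ∈ D, x ∈ K x l → x ∈ V := by
  suffices h : ∀ᶠ l in 𝓝 l₀, ∀ x ∈ D, x ∈ D → x ∈ K x l → x ∈ V from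
    h.mono fun l hl x hx => hl x hx hx
  refine hD.eventually_forall_of_forall_eventually fun x hx => ?_
  by_cases hxV : x ∈ V
  · exact ((continuous_snd.tendsto (l₀, x)).eventually (hV.mem_nhds hxV)).mono
      fun z hz _ _ => hz
  · have hnot := eventually_nhdsWithin_iff.mp <|
      (hKusc x hx).eventually_notMem (hKcl x hx) continuousAt_fst fun h => hxV (hfix x hx h)
    filter_upwards [(continuous_swap.tendsto (l₀, x)).eventually hnot] with z hz hzD hzK
    exact absurd hzK (hz ⟨hzD, mem_univ _⟩)

lemma eventually_forall_mem_values_subset {Ω Y : Type*} [TopologicalSpace Ω]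
    [TopologicalSpace Y] {F : X → X → Ω → Set Y} {O : Set Y} {x : X} {u₀ : Ω}
    (hKD : ∀ x ∈ D, ∀ l, K x l ⊆ D) (hKc : IsCompact (K x l₀))
    (hKusc : UscWithinAt (fun p : X × Λ => K p.1 p.2) (D ×ˢ univ) (x, l₀))
    (hFusc : ∀ y ∈ K x l₀,
      UscWithinAt (fun q : X × X × Ω => F q.1 q.2.1 q.2.2) (D ×ˢ D ×ˢ univ) (x, y, u₀))
    (hO : IsOpen O) (hF : ∀ y ∈ K x l₀, F x y u₀ ⊆ O) :
    ∀ᶠ x' in 𝓝 x, ∀ᶠ p : Ω × Λ in 𝓝 (u₀, l₀),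
      x' ∈ D → ∀ y ∈ K x' p.2, F x' y p.1 ⊆ O := by
  have hloc : ∀ y ∈ K x l₀, ∀ᶠ q : (X × Ω) × X in 𝓝 (x, u₀) ×ˢ 𝓝 y,
      q.1.1 ∈ D → q.2 ∈ D → F q.1.1 q.2 q.1.2 ⊆ O := by
    intro y hy
    have hFy := eventually_nhdsWithin_iff.mp
      ((hFusc y hy).eventually_subset (hO.mem_nhdsSet.mpr (hF y hy)))
    have hcont : Continuous fun q : (X × Ω) × X => (q.1.1, q.2, q.1.2) := by fun_prop
    rw [← nhds_prod_eq]
    filter_upwards [(hcont.tendsto ((x, u₀), y)).eventually hFy] with q hq hq₁ hq₂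
    exact hq ⟨hq₁, hq₂, mem_univ _⟩
  obtain ⟨A, hA, W, hW, hAW⟩ := mem_prod_iff.mp (hKc.mem_prod_nhdsSet_of_forall hloc)
  have hKW := eventually_nhdsWithin_iff.mp (hKusc.eventually_subset hW)
  have hA' : ∀ᶠ q in 𝓝 (x, u₀), q ∈ A := hA
  filter_upwards [hA'.curry_nhds, hKW.curry_nhds] with x' hx'A hx'K
  rw [nhds_prod_eq]
  filter_upwards [hx'A.prod_mk hx'K] with p ⟨hpA, hpK⟩ hx'D y hy
  have hyW : y ∈ W := hpK ⟨hx'D, mem_univ _⟩ hy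
  exact hAW (show ((x', p.1), y) ∈ A ×ˢ W from ⟨hpA, hyW⟩) hx'D (hKD x' hx'D _ hy)

end Parametric

theorem stmt_14_general {Λ Ω Y X : Type*}
    [NormedAddCommGroup Λ]
    [NormedAddCommGroup Ω]
    [NormedAddCommGroup Y]
    [NormedAddCommGroup X] [NormedSpace ℝ X]
    (D : Set X) (hDcomp : IsCompact D)
    (K : X → Λ → Set X) (hKD : ∀ x ∈ D, ∀ l : Λ, K x l ⊆ D)
    (F : X → X → Ω → Set Y)
    (C : Set Y) (hCclosed : IsClosed C)
    (u₀ : Ω) (l₀ : Λ)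
    (M₂ : Ω × Λ → Set X)
    (hM₂ : ∀ p : Ω × Λ, M₂ p = {x | x ∈ D ∧ x ∈ closure (K x p.2) ∧
      ∀ y ∈ K x p.2, F x y p.1 ⊆ (-(interior C))ᶜ})
    (hMne : ∃ U ∈ 𝓝 ((u₀, l₀) : Ω × Λ), ∀ p ∈ U, (M₂ p).Nonempty)
    (hKrot : RotundOn D (fun x => K x l₀))
    (hKcont : ∀ x ∈ D,
      UscWithinAt (fun p : X × Λ => K p.1 p.2) (D ×ˢ (univ : Set Λ)) (x, l₀) ∧
      LscWithinAt (fun p : X × Λ => K p.1 p.2) (D ×ˢ (univ : Set Λ)) (x, l₀))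
    (hKval : ∀ x ∈ D, ∀ l : Λ, (K x l).Nonempty ∧ IsClosed (K x l) ∧ Convex ℝ (K x l))
    (hFusc : ∀ x ∈ D, ∀ y ∈ D,
      UscWithinAt (fun q : X × X × Ω => F q.1 q.2.1 q.2.2)
        (D ×ˢ D ×ˢ (univ : Set Ω)) (x, y, u₀))
    (hF3 : ∀ x ∈ M₂ (u₀, l₀), ∀ y ∈ K x l₀, F x y u₀ ⊆ (-C)ᶜ) :
    LscAt M₂ (u₀, l₀) := by
  have hKcpt : ∀ x ∈ D, IsCompact (K x l₀) := fun x hx =>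
    hDcomp.of_isClosed_subset (hKval x hx l₀).2.1 (hKD x hx l₀)
  have hfixed : ∀ {p : Ω × Λ} {x : X}, x ∈ M₂ p → x ∈ D ∧ x ∈ K x p.2 := by
    intro p x hx
    rw [hM₂] at hx
    exact ⟨hx.1, (hKval x hx.1 p.2).2.1.closure_subset hx.2.1⟩
  intro x hx V hVo hxV
  obtain ⟨hxD, hxK⟩ := hfixed hx
  suffices h : ∀ᶠ p in 𝓝 (u₀, l₀), (M₂ p ∩ V).Nonempty from ⟨_, h, fun _ => id⟩
  by_cases huniq : ∀ x' ∈ D, x' ∈ K x' l₀ → x' = x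
  · obtain ⟨U, hU, hUne⟩ := hMne
    have hV := eventually_forall_fixed_mem hDcomp (fun x' hx' => (hKcont x' hx').1)
      (fun x' hx' => (hKval x' hx' l₀).2.1) hVo fun x' hx' hx'K => huniq x' hx' hx'K ▸ hxV
    filter_upwards [hU, (continuous_snd.tendsto (u₀, l₀)).eventually hV] with p hp hpV
    obtain ⟨y, hy⟩ := hUne p hp
    exact ⟨y, hy, hpV y (hfixed hy).1 (hfixed hy).2⟩
  push Not at huniq
  obtain ⟨x', hx'D, hx'K, hne⟩ := huniq
  have hF := eventually_forall_mem_values_subset hKD (hKcpt x hxD) (hKcont x hxD).1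
    (fun y hy => hFusc x hxD y (hKD x hxD l₀ hy)) hCclosed.neg.isOpen_compl (hF3 x hx)
  obtain ⟨w, ⟨hwF, hwV⟩, hwG⟩ := ((hF.and (hVo.mem_nhds hxV)).and_frequently
    (hKrot.frequently_diag_mem_interior ⟨hxD, hxK⟩ ⟨hx'D, hx'K⟩ hne.symm)).exists
  obtain ⟨hwD, hwK⟩ := mem_nhds_of_mem_interior_graphOn hwG
  have hwfix : ∀ᶠ l in 𝓝 l₀, w ∈ K w l := eventually_mem_self_of_lscWithinAt hwD
    (hKcont w hwD).2 (hKcpt w hwD) hwK fun x hx l => ⟨(hKval x hx l).2.2, (hKval x hx l).2.1⟩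
  rw [nhds_prod_eq] at hwF ⊢
  filter_upwards [hwF, hwfix.prod_inr _] with p hpF hpK
  refine ⟨w, ?_, hwV⟩
  rw [hM₂]
  have hC : (-C)ᶜ ⊆ (-interior C)ᶜ :=
    compl_subset_compl.mpr (neg_subset_neg.mpr interior_subset)
  exact ⟨hwD, subset_closure hpK, fun y hy => (hpF hwD y hy).trans hC⟩

/-- Theorem 4.3: lower semicontinuity at `(u₀, λ₀)` of the solution mapping
`M₂(u, λ) = {x ∈ cl K(x,λ) : F(x,y,u) ⊆ Y \ −int C for all y ∈ K(x,λ)}` of the strong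
parametric vector quasiequilibrium problem, under: `K(·,λ₀)` rotund, `K` continuous at
every point of `D × {λ₀}` with nonempty closed convex values, `F` u.s.c. at every point of
`D × D × {u₀}`, and `F(x,y,u₀) ⊆ Y \ −C` for all `x ∈ M₂(u₀,λ₀)`, `y ∈ K(x,λ₀)`.
Reflexivity of the Banach space `X` is encoded as surjectivity of the canonical inclusion
into the double dual. -/
theorem stmt_14 {Λ Ω Y X : Type*}
    [NormedAddCommGroup Λ] [NormedSpace ℝ Λ]
    [NormedAddCommGroup Ω] [NormedSpace ℝ Ω]
    [NormedAddCommGroup Y] [NormedSpace ℝ Y]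
    [NormedAddCommGroup X] [NormedSpace ℝ X] [CompleteSpace X]
    (hrefl : Function.Surjective (NormedSpace.inclusionInDoubleDual ℝ X))
    (D : Set X) (hDne : D.Nonempty) (hDcomp : IsCompact D) (hDconv : Convex ℝ D)
    (K : X → Λ → Set X) (hKD : ∀ x ∈ D, ∀ l : Λ, K x l ⊆ D)
    (F : X → X → Ω → Set Y)
    (C : Set Y) (hCclosed : IsClosed C) (hCint : (interior C).Nonempty)
    (u₀ : Ω) (l₀ : Λ)
    (M₂ : Ω × Λ → Set X)
    (hM₂ : ∀ p : Ω × Λ, M₂ p = {x | x ∈ D ∧ x ∈ closure (K x p.2) ∧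
      ∀ y ∈ K x p.2, F x y p.1 ⊆ (-(interior C))ᶜ})
    (hMne : ∃ U ∈ 𝓝 ((u₀, l₀) : Ω × Λ), ∀ p ∈ U, (M₂ p).Nonempty)
    (hKrot : RotundOn D (fun x => K x l₀))
    (hKcont : ∀ x ∈ D,
      UscWithinAt (fun p : X × Λ => K p.1 p.2) (D ×ˢ (univ : Set Λ)) (x, l₀) ∧
      LscWithinAt (fun p : X × Λ => K p.1 p.2) (D ×ˢ (univ : Set Λ)) (x, l₀))
    (hKval : ∀ x ∈ D, ∀ l : Λ, (K x l).Nonempty ∧ IsClosed (K x l) ∧ Convex ℝ (K x l))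
    (hFusc : ∀ x ∈ D, ∀ y ∈ D,
      UscWithinAt (fun q : X × X × Ω => F q.1 q.2.1 q.2.2)
        (D ×ˢ D ×ˢ (univ : Set Ω)) (x, y, u₀))
    (hF3 : ∀ x ∈ M₂ (u₀, l₀), ∀ y ∈ K x l₀, F x y u₀ ⊆ (-C)ᶜ) :
    LscAt M₂ (u₀, l₀) :=
  stmt_14_general D hDcomp K hKD F C hCclosed u₀ l₀ M₂ hM₂ hMne hKrot hKcont hKval hFusc hF3
end
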